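/- The group of ℂ-linear automorphisms of ℂ² generated by γ₁(z₁,z₂) = (iz₁, -iz₂) and γ₃(z₁,z₂) = ((i+1)/2)·(i(z₁-z₂), -(z₁+z₂)) has order 24 (it is the binary tetrahedral group). -/

import Mathlib

/-!
The entries of `γ₁` and of `(1 + i) γ₃` are Gaussian integers, so every word in the generators is
`(1 + i)⁻ᵏ` times a Gaussian-integer matrix, and identities between words can be decided by
computing in `ℤ[i]`. Put `j = γ₃ γ₁ γ₃²` (the quaternion `j`; `γ₁` plays `i`). The 24 products
`γ₁ᵃ jᵇ γ₃ᵉ` with `a < 4`, `b < 2`, `e < 3` are pairwise distinct, and the set they form is stable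
under left multiplication by `γ₁` and `γ₃`. A finite set containing `1` and stable under left
multiplication by the generators contains the group they generate, since left multiplication by an
element permutes a finite set that it preserves.
-/

open Complex Function

section IsScaledLift

variable {R K n : Type*} [CommRing R] [Field K] [Fintype n] [DecidableEq n]

def IsScaledLift (f : R →+* K) (c : R) (k : ℕ) (M : Matrix n n R) (g : GL n K) : Prop :=
  f c ^ k • (g : Matrix n n K) = M.map f

variable {f : R →+* K} {c : R} {k l : ℕ} {M N : Matrix n n R} {g h : GL n K}

namespace IsScaledLift

theorem one : IsScaledLift f c 0 (1 : Matrix n n R) 1 := by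
  simp [IsScaledLift]

theorem mul (hg : IsScaledLift f c k M g) (hh : IsScaledLift f c l N h) :
    IsScaledLift f c (k + l) (M * N) (g * h) := by
  rw [IsScaledLift, Matrix.map_mul, ← hg, ← hh, Units.val_mul, pow_add, smul_mul_smul_comm]

theorem pow (hg : IsScaledLift f c k M g) (m : ℕ) : IsScaledLift f c (k * m) (M ^ m) (g ^ m) := by
  induction m with
  | zero => exact one
  | succ m ih => rw [pow_succ, pow_succ, mul_add, mul_one]; exact ih.mul hg

theorem smul_pow (hg : IsScaledLift f c k M g) (j : ℕ) :
    IsScaledLift f c (k + j) (c ^ j • M) g := by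
  rw [IsScaledLift, Matrix.map_smul' _ _ _ (map_mul f), ← hg, map_pow, smul_smul, pow_add, mul_comm]

theorem of_smul_pow (hc : f c ≠ 0) {j : ℕ} (hg : IsScaledLift f c (k + j) (c ^ j • M) g) :
    IsScaledLift f c k M g := by
  rw [IsScaledLift, Matrix.map_smul' _ _ _ (map_mul f), map_pow, pow_add, mul_comm,
    ← smul_smul] at hg
  exact smul_right_injective _ (pow_ne_zero j hc) hg

theorem eq_iff (hf : Injective f) (hc : f c ≠ 0) (hg : IsScaledLift f c k M g)
    (hh : IsScaledLift f c k N h) : g = h ↔ M = N := by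
  rw [← Units.val_inj, ← (smul_right_injective _ (pow_ne_zero k hc)).eq_iff, hg, hh,
    (Matrix.map_injective hf).eq_iff]

end IsScaledLift

end IsScaledLift

theorem Subgroup.closure_subset_of_finite_of_mul_mem {G : Type*} [Group G] {s t : Set G}
    (ht : t.Finite) (h1 : 1 ∈ t) (hmul : ∀ x ∈ s, ∀ y ∈ t, x * y ∈ t) :
    (Subgroup.closure s : Set G) ⊆ t := by
  intro g hg
  induction hg using Subgroup.closure_induction_left with
  | one => exact h1
  | mul_left x hx y _ ih => exact hmul x hx y ih
  | inv_mul_cancel x hx y _ ih =>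
    have hbij := (ht.injOn_iff_bijOn_of_mapsTo (hmul x hx)).mp (mul_right_injective x).injOn
    obtain ⟨z, hz, rfl⟩ := hbij.surjOn ih
    simpa using hz

namespace BinaryTetrahedral

def normalForm {G : Type*} [Monoid G] (x y : G) (t : Fin 4 × Fin 2 × Fin 3) : G :=
  x ^ (t.1 : ℕ) * (y * x * y * y) ^ (t.2.1 : ℕ) * y ^ (t.2.2 : ℕ)

theorem normalForm_mem_closure {G : Type*} [Group G] (x y : G) (t : Fin 4 × Fin 2 × Fin 3) :
    normalForm x y t ∈ Subgroup.closure {x, y} := by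
  have hx : x ∈ Subgroup.closure {x, y} := Subgroup.subset_closure (by simp)
  have hy : y ∈ Subgroup.closure {x, y} := Subgroup.subset_closure (by simp)
  unfold normalForm
  exact mul_mem (mul_mem (pow_mem hx _) (pow_mem (mul_mem (mul_mem (mul_mem hy hx) hy) hy) _))
    (pow_mem hy _)

open GaussianInt

def onePlusI : GaussianInt := ⟨1, 1⟩

def liftγ₁ : Matrix (Fin 2) (Fin 2) GaussianInt := !![⟨0, 1⟩, 0; 0, ⟨0, -1⟩]

def liftγ₃ : Matrix (Fin 2) (Fin 2) GaussianInt := !![-1, 1; ⟨0, -1⟩, ⟨0, -1⟩]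

def liftJ : Matrix (Fin 2) (Fin 2) GaussianInt := !![0, 1; -1, 0]

/-- `γ₃ᵉ` has denominator `(1 + i)ᵉ`; the scalar brings every normal form to denominator
`(1 + i)²`. -/
def liftNormalForm (t : Fin 4 × Fin 2 × Fin 3) : Matrix (Fin 2) (Fin 2) GaussianInt :=
  onePlusI ^ (2 - (t.2.2 : ℕ)) • (liftγ₁ ^ (t.1 : ℕ) * liftJ ^ (t.2.1 : ℕ) * liftγ₃ ^ (t.2.2 : ℕ))

theorem liftγ₃_mul_liftγ₁_mul_liftγ₃_mul_liftγ₃ :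
    liftγ₃ * liftγ₁ * liftγ₃ * liftγ₃ = onePlusI ^ 3 • liftJ := by
  decide

theorem liftγ₁_mul_liftNormalForm (t : Fin 4 × Fin 2 × Fin 3) :
    liftγ₁ * liftNormalForm t = liftNormalForm (t.1 + 1, t.2) := by
  revert t; decide

theorem exists_liftγ₃_mul_liftNormalForm (t : Fin 4 × Fin 2 × Fin 3) :
    ∃ t', liftγ₃ * liftNormalForm t = onePlusI • liftNormalForm t' := by
  revert t; decide

theorem liftNormalForm_injective : Injective liftNormalForm := by
  decide

theorem toComplex_onePlusI : toComplex onePlusI = 1 + I := by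
  simp [onePlusI, toComplex_def]

theorem toComplex_onePlusI_ne_zero : toComplex onePlusI ≠ 0 := by
  rw [toComplex_onePlusI]
  intro h
  simpa using congrArg Complex.im h

section

variable {g1 g3 : GL (Fin 2) ℂ}
  (hg1 : (g1 : Matrix (Fin 2) (Fin 2) ℂ) = !![I, 0; 0, -I])
  (hg3 : (g3 : Matrix (Fin 2) (Fin 2) ℂ) = ((I + 1) / 2) • !![I, -I; -1, -1])

include hg1 in
theorem isScaledLift_γ₁ : IsScaledLift toComplex onePlusI 0 liftγ₁ g1 := by
  rw [IsScaledLift, pow_zero, one_smul, hg1]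
  ext i j
  fin_cases i <;> fin_cases j <;> simp [liftγ₁, toComplex_def]

include hg3 in
theorem isScaledLift_γ₃ : IsScaledLift toComplex onePlusI 1 liftγ₃ g3 := by
  have hscalar : (1 + I) * ((I + 1) / 2) = I := by linear_combination (1 / 2 : ℂ) * I_sq
  rw [IsScaledLift, pow_one, toComplex_onePlusI, hg3, smul_smul, hscalar]
  ext i j
  fin_cases i <;> fin_cases j <;> simp [liftγ₃, toComplex_def]

include hg1 hg3 in
theorem isScaledLift_normalForm (t : Fin 4 × Fin 2 × Fin 3) :
    IsScaledLift toComplex onePlusI 2 (liftNormalForm t) (normalForm g1 g3 t) := by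
  have hJ : IsScaledLift toComplex onePlusI 0 liftJ (g3 * g1 * g3 * g3) := by
    refine IsScaledLift.of_smul_pow (j := 3) toComplex_onePlusI_ne_zero ?_
    rw [← liftγ₃_mul_liftγ₁_mul_liftγ₃_mul_liftγ₃]
    exact (((isScaledLift_γ₃ hg3).mul (isScaledLift_γ₁ hg1)).mul (isScaledLift_γ₃ hg3)).mul
      (isScaledLift_γ₃ hg3)
  have h := ((((isScaledLift_γ₁ hg1).pow t.1).mul (hJ.pow t.2.1)).mul
    ((isScaledLift_γ₃ hg3).pow t.2.2)).smul_pow (2 - t.2.2)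
  have he : (t.2.2 : ℕ) ≤ 2 := Nat.le_of_lt_succ t.2.2.isLt
  rwa [zero_mul, zero_mul, zero_add, zero_add, one_mul, Nat.add_sub_cancel' he] at h

include hg1 hg3 in
theorem normalForm_injective : Injective (normalForm g1 g3) := fun t t' h =>
  liftNormalForm_injective <| ((isScaledLift_normalForm hg1 hg3 t).eq_iff toComplex_injective
    toComplex_onePlusI_ne_zero (isScaledLift_normalForm hg1 hg3 t')).mp h

include hg1 hg3 in
theorem γ₁_mul_normalForm (t : Fin 4 × Fin 2 × Fin 3) :
    g1 * normalForm g1 g3 t = normalForm g1 g3 (t.1 + 1, t.2) := by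
  have h := (isScaledLift_γ₁ hg1).mul (isScaledLift_normalForm hg1 hg3 t)
  rw [zero_add, liftγ₁_mul_liftNormalForm] at h
  exact (h.eq_iff toComplex_injective toComplex_onePlusI_ne_zero
    (isScaledLift_normalForm hg1 hg3 _)).mpr rfl

include hg1 hg3 in
theorem exists_γ₃_mul_normalForm (t : Fin 4 × Fin 2 × Fin 3) :
    ∃ t', g3 * normalForm g1 g3 t = normalForm g1 g3 t' := by
  obtain ⟨t', ht'⟩ := exists_liftγ₃_mul_liftNormalForm t
  have h := (isScaledLift_γ₃ hg3).mul (isScaledLift_normalForm hg1 hg3 t)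
  rw [ht', ← pow_one onePlusI, add_comm] at h
  exact ⟨t', ((h.of_smul_pow toComplex_onePlusI_ne_zero).eq_iff toComplex_injective
    toComplex_onePlusI_ne_zero (isScaledLift_normalForm hg1 hg3 t')).mpr rfl⟩

include hg1 hg3 in
theorem closure_eq_range_normalForm :
    (Subgroup.closure {g1, g3} : Set (GL (Fin 2) ℂ)) = Set.range (normalForm g1 g3) := by
  refine (Subgroup.closure_subset_of_finite_of_mul_mem (Set.finite_range _) ⟨0, ?_⟩ ?_).antisymm
    (Set.range_subset_iff.mpr (normalForm_mem_closure g1 g3))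
  · simp [normalForm]
  · rintro x (rfl | rfl) _ ⟨t, rfl⟩
    · exact ⟨_, (γ₁_mul_normalForm hg1 hg3 t).symm⟩
    · obtain ⟨t', ht'⟩ := exists_γ₃_mul_normalForm hg1 hg3 t
      exact ⟨t', ht'.symm⟩

end

end BinaryTetrahedral

open BinaryTetrahedral in
/-- the group of ℂ-linear automorphisms of `ℂ²` generated by
`γ₁(z₁,z₂) = (iz₁, -iz₂)` and `γ₃(z₁,z₂) = ((i+1)/2)·(i(z₁-z₂), -(z₁+z₂))`
has order 24 (the binary tetrahedral group). -/
theorem binary_tetrahedral_order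
    (g1 g3 : GL (Fin 2) ℂ)
    (hg1 : (g1 : Matrix (Fin 2) (Fin 2) ℂ) = !![I, 0; 0, -I])
    (hg3 : (g3 : Matrix (Fin 2) (Fin 2) ℂ) = ((I + 1) / 2) • !![I, -I; -1, -1]) :
    Nat.card (Subgroup.closure ({g1, g3} : Set (GL (Fin 2) ℂ))) = 24 := by
  rw [← SetLike.coe_sort_coe, closure_eq_range_normalForm hg1 hg3,
    Nat.card_range_of_injective (normalForm_injective hg1 hg3)]
  simp
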